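/- arXiv:2601.12514 — 9 statements merged into one kernel-verified Lean document; each statement's English description precedes it below -/
import Mathlib

section
/- Color the unit-square face of the square tiling with lower-left corner (x,y) ∈ ℤ×ℤ by f(x,y) = (1+x+2y) mod 5. If two distinct unit-square faces share at least one corner vertex (equivalently, their lower-left corners (x,y) ≠ (x',y') satisfy |x−x'| ≤ 1 and |y−y'| ≤ 1), then their face colors are distinct. In particular, any two faces sharing an edge receive distinct colors, so the coloring of Statement 3 is a strict efficient total cell coloring. -/
/-- Color of the unit-square face with lower-left corner (x,y): (1 + x + 2y) mod 5. -/
def fSq (x y : ℤ) : ZMod 5 := ((1 + x + 2 * y : ℤ) : ZMod 5)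

theorem stmt3 :
    ∀ x y x' y' : ℤ,
      (x, y) ≠ (x', y') → |x - x'| ≤ 1 → |y - y'| ≤ 1 →
      fSq x y ≠ fSq x' y' := by
  intro x y x' y' hne hx hy heq
  rw [abs_le] at hx hy
  have h5 : (5 : ℤ) ∣ (1 + x + 2 * y) - (1 + x' + 2 * y') := by
    have := (ZMod.intCast_eq_intCast_iff' _ _ _).mp heq
    omega
  obtain ⟨k, hk⟩ := h5
  have hxy : x ≠ x' ∨ y ≠ y' := by
    by_contra h; push_neg at h; exact hne (by rw [h.1, h.2])
  omega
end

section
/- For every vertex v = (x,y) of the triangular-lattice graph GΔ on ℤ×ℤ, the vertex-coloring c(x,y) = (x+5y) mod 7 restricts to a bijection from the closed neighborhood N[v] (consisting of v and its six neighbors) onto ZMod 7. Consequently, for each i ∈ ZMod 7 the color class {(x,y) ∈ ℤ×ℤ : (x+5y) mod 7 = i} is an efficient dominating set (perfect code) of GΔ, and these seven classes partition the vertex set. -/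
/-- The triangular-lattice graph on ℤ × ℤ: two vertices adjacent iff their difference is
±(1,0), ±(0,1) or ±(1,−1). -/
def triGraph : SimpleGraph (ℤ × ℤ) :=
  SimpleGraph.fromRel (fun u v => u - v = (1, 0) ∨ u - v = (0, 1) ∨ u - v = (1, -1))

/-- The mod-7 vertex coloring c(x,y) = (x + 5y) mod 7. -/
def cTri (p : ℤ × ℤ) : ZMod 7 := ((p.1 + 5 * p.2 : ℤ) : ZMod 7)

/-- Membership in the closed neighborhood, in coordinates. -/
lemma mem_iff (v w : ℤ × ℤ) : w ∈ insert v (triGraph.neighborSet v) ↔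
    (w.1 - v.1 = 0 ∧ w.2 - v.2 = 0) ∨ (w.1 - v.1 = 1 ∧ w.2 - v.2 = 0) ∨
    (w.1 - v.1 = -1 ∧ w.2 - v.2 = 0) ∨ (w.1 - v.1 = 0 ∧ w.2 - v.2 = 1) ∨
    (w.1 - v.1 = 0 ∧ w.2 - v.2 = -1) ∨ (w.1 - v.1 = 1 ∧ w.2 - v.2 = -1) ∨
    (w.1 - v.1 = -1 ∧ w.2 - v.2 = 1) := by
  simp [triGraph, SimpleGraph.neighborSet, SimpleGraph.fromRel_adj, Prod.ext_iff, Prod.sub_def,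
    Set.mem_insert_iff, ne_eq]
  omega

/-- The coloring equation, as an integer congruence. -/
lemma cTri_eq_iff (w : ℤ × ℤ) (i : ZMod 7) :
    cTri w = i ↔ (w.1 + 5 * w.2) % 7 = (i.val : ℤ) % 7 := by
  rw [cTri]
  conv_lhs => rw [show i = ((i.val : ℤ) : ZMod 7) by simp]
  rw [ZMod.intCast_eq_intCast_iff, Int.ModEq]
  norm_num

lemma exu (i : ZMod 7) (v : ℤ × ℤ) (a b : ℤ)
    (hab : (a = 0 ∧ b = 0) ∨ (a = 1 ∧ b = 0) ∨ (a = -1 ∧ b = 0) ∨ (a = 0 ∧ b = 1) ∨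
      (a = 0 ∧ b = -1) ∨ (a = 1 ∧ b = -1) ∨ (a = -1 ∧ b = 1))
    (hc : (v.1 + a + 5 * (v.2 + b)) % 7 = (i.val : ℤ) % 7) :
    ∃! w : ℤ × ℤ, w ∈ insert v (triGraph.neighborSet v) ∧ cTri w = i := by
  refine ⟨(v.1 + a, v.2 + b), ⟨(mem_iff v _).2 (by simp; omega),
    (cTri_eq_iff _ i).2 (by simpa using hc)⟩, fun w' ⟨hm, hcw⟩ => ?_⟩
  rw [mem_iff] at hm
  rw [cTri_eq_iff] at hcw
  rw [Prod.ext_iff]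
  simp only []
  omega

theorem stmt5 :
    (∀ v : ℤ × ℤ,
      Set.BijOn cTri (insert v (triGraph.neighborSet v)) Set.univ) ∧
    (∀ i : ZMod 7, ∀ v : ℤ × ℤ,
      ∃! w : ℤ × ℤ, w ∈ insert v (triGraph.neighborSet v) ∧ cTri w = i) ∧
    (∀ p : ℤ × ℤ, ∃! i : ZMod 7, cTri p = i) := by
  have h2 : ∀ i : ZMod 7, ∀ v : ℤ × ℤ,
      ∃! w : ℤ × ℤ, w ∈ insert v (triGraph.neighborSet v) ∧ cTri w = i := by
    intro i v
    have hk0 : (0 : ℤ) ≤ (i.val : ℤ) := by positivity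
    have hk7 : (i.val : ℤ) < 7 := by exact_mod_cast ZMod.val_lt i
    set k := (i.val : ℤ)
    have hr : ((k - (v.1 + 5 * v.2)) % 7 = 0) ∨ ((k - (v.1 + 5 * v.2)) % 7 = 1) ∨
        ((k - (v.1 + 5 * v.2)) % 7 = 2) ∨ ((k - (v.1 + 5 * v.2)) % 7 = 3) ∨
        ((k - (v.1 + 5 * v.2)) % 7 = 4) ∨ ((k - (v.1 + 5 * v.2)) % 7 = 5) ∨
        ((k - (v.1 + 5 * v.2)) % 7 = 6) := by omega
    rcases hr with h | h | h | h | h | h | h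
    · exact exu i v 0 0 (by tauto) (by omega)
    · exact exu i v 1 0 (by tauto) (by omega)
    · exact exu i v 0 (-1) (by tauto) (by omega)
    · exact exu i v 1 (-1) (by tauto) (by omega)
    · exact exu i v (-1) 1 (by tauto) (by omega)
    · exact exu i v 0 1 (by tauto) (by omega)
    · exact exu i v (-1) 0 (by tauto) (by omega)
  refine ⟨fun v => ⟨fun _ _ => trivial, ?_, fun i _ => ?_⟩, h2,
    fun p => ⟨cTri p, rfl, fun y h => h.symm⟩⟩
  · intro a ha b hb hab
    obtain ⟨w, _, huniq⟩ := h2 (cTri a) v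
    rw [huniq a ⟨ha, rfl⟩, huniq b ⟨hb, hab.symm⟩]
  · obtain ⟨w, ⟨hw, hcw⟩, _⟩ := h2 i v
    exact ⟨w, hw, hcw⟩
end

section
/- In the triangular-lattice graph GΔ on ℤ×ℤ, color each vertex (x,y) with (x+5y) mod 7, each horizontal edge {(x,y),(x+1,y)} with (4+x+5y) mod 7, each vertical edge {(x,y),(x,y+1)} with (6+x+5y) mod 7, and each anti-diagonal edge {(x+1,y),(x,y+1)} with (3+x+5y) mod 7. Then for every vertex v, the seven values consisting of the color of v and the colors of the six edges incident with v are exactly all of ZMod 7; moreover each edge's color differs from the colors of both of its endpoints. Hence this assignment is a proper total coloring of GΔ with 7 colors. -/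
/-- Vertex color: (x + 5y) mod 7. -/
def cV (x y : ℤ) : ZMod 7 := ((x + 5 * y : ℤ) : ZMod 7)

/-- Color of the horizontal edge {(x,y),(x+1,y)}: (4 + x + 5y) mod 7. -/
def eH (x y : ℤ) : ZMod 7 := ((4 + x + 5 * y : ℤ) : ZMod 7)

/-- Color of the vertical edge {(x,y),(x,y+1)}: (6 + x + 5y) mod 7. -/
def eV (x y : ℤ) : ZMod 7 := ((6 + x + 5 * y : ℤ) : ZMod 7)

/-- Color of the anti-diagonal edge {(x+1,y),(x,y+1)}: (3 + x + 5y) mod 7. -/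
def eA (x y : ℤ) : ZMod 7 := ((3 + x + 5 * y : ℤ) : ZMod 7)

lemma key1 (c : ZMod 7) :
    ({c, c + 4, c + 3, c + 6, c + 1, c + 2, c + 5} : Finset (ZMod 7)) = Finset.univ := by
  revert c; decide

lemma key2 (c : ZMod 7) :
    c + 4 ≠ c ∧ c + 4 ≠ c + 1 ∧ c + 6 ≠ c ∧ c + 6 ≠ c + 5 ∧
    c + 3 ≠ c + 1 ∧ c + 3 ≠ c + 5 := by
  revert c; decide

lemma keyz (c k : ZMod 7) (hk : k ≠ 0) : c + k ≠ c := by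
  intro h
  exact hk (by rwa [add_eq_left] at h)

theorem stmt6 :
    -- the vertex color of (x,y) together with the colors of its six incident edges
    -- are exactly all of ZMod 7
    (∀ x y : ℤ,
      ({cV x y, eH x y, eH (x - 1) y, eV x y, eV x (y - 1),
        eA (x - 1) y, eA x (y - 1)} : Finset (ZMod 7)) = Finset.univ) ∧
    -- each edge's color differs from the colors of both of its endpoints
    (∀ x y : ℤ,
      eH x y ≠ cV x y ∧ eH x y ≠ cV (x + 1) y ∧
      eV x y ≠ cV x y ∧ eV x y ≠ cV x (y + 1) ∧
      eA x y ≠ cV (x + 1) y ∧ eA x y ≠ cV x (y + 1)) ∧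
    -- adjacent vertices get distinct colors
    (∀ u v : ℤ × ℤ, triGraph.Adj u v → cV u.1 u.2 ≠ cV v.1 v.2) := by
  have hH : ∀ x y : ℤ, eH x y = cV x y + 4 := by
    intro x y; simp only [eH, cV]; push_cast; ring
  have hH' : ∀ x y : ℤ, eH (x - 1) y = cV x y + 3 := by
    intro x y; simp only [eH, cV]; push_cast; ring
  have hV : ∀ x y : ℤ, eV x y = cV x y + 6 := by
    intro x y; simp only [eV, cV]; push_cast; ring
  have hV' : ∀ x y : ℤ, eV x (y - 1) = cV x y + 1 := by
    intro x y; simp only [eV, cV]; push_cast; ring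
  have hA' : ∀ x y : ℤ, eA (x - 1) y = cV x y + 2 := by
    intro x y; simp only [eA, cV]; push_cast; ring
  have hA'' : ∀ x y : ℤ, eA x (y - 1) = cV x y + 5 := by
    intro x y; simp only [eA, cV]
    rw [show (5 : ZMod 7) = ((-2 : ℤ) : ZMod 7) by decide]
    push_cast; ring
  have hCx : ∀ x y : ℤ, cV (x + 1) y = cV x y + 1 := by
    intro x y; simp only [cV]; push_cast; ring
  have hCy : ∀ x y : ℤ, cV x (y + 1) = cV x y + 5 := by
    intro x y; simp only [cV]; push_cast; ring
  have hA : ∀ x y : ℤ, eA x y = cV x y + 3 := by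
    intro x y; simp only [eA, cV]; push_cast; ring
  have hdiff : ∀ a b c d : ℤ,
      cV a b = cV c d + (((a - c) + 5 * (b - d) : ℤ) : ZMod 7) := by
    intro a b c d; simp only [cV]; push_cast; ring
  refine ⟨?_, ?_, ?_⟩
  · intro x y
    rw [hH, hH', hV, hV', hA', hA'']
    exact key1 _
  · intro x y
    rw [hH, hV, hA, hCx, hCy]
    exact key2 (cV x y)
  · rintro ⟨a, b⟩ ⟨c, d⟩ ⟨hne, h⟩
    simp only [Prod.mk_sub_mk, Prod.mk.injEq] at h
    have hnd : ¬ ((7 : ℤ) ∣ (a - c) + 5 * (b - d)) := by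
      rcases h with (⟨ha, hb⟩ | ⟨ha, hb⟩ | ⟨ha, hb⟩) | (⟨ha, hb⟩ | ⟨ha, hb⟩ | ⟨ha, hb⟩) <;>
        omega
    simp only
    rw [hdiff a b c d]
    refine keyz _ _ ?_
    intro h0
    exact hnd ((ZMod.intCast_zmod_eq_zero_iff_dvd _ 7).mp h0)
end

section
/- In the triangular tiling of the plane with vertices ℤ×ℤ, color each vertex (x,y) with (x+5y) mod 7, each horizontal edge {(x,y),(x+1,y)} with (4+x+5y) mod 7, each vertical edge {(x,y),(x,y+1)} with (6+x+5y) mod 7, and each anti-diagonal edge {(x+1,y),(x,y+1)} with (3+x+5y) mod 7. Then for every (x,y): the set of colors on the three vertices and three edges of the upward triangular face {(x,y),(x+1,y),(x,y+1)} is exactly ZMod 7 \ {(2+x+5y) mod 7}, and the set of colors on the three vertices and three edges of the downward triangular face {(x+1,y),(x,y+1),(x+1,y+1)} is exactly ZMod 7 \ {(4+x+5y) mod 7}. Thus assigning face color (2+x+5y) mod 7 to each upward triangle and (4+x+5y) mod 7 to each downward triangle, the boundary of each triangular face carries every color except the color of the face itself. -/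
/-- Color of the upward triangular face {(x,y),(x+1,y),(x,y+1)}: (2 + x + 5y) mod 7. -/
def fUp (x y : ℤ) : ZMod 7 := ((2 + x + 5 * y : ℤ) : ZMod 7)

/-- Color of the downward triangular face {(x+1,y),(x,y+1),(x+1,y+1)}: (4 + x + 5y) mod 7. -/
def fDown (x y : ℤ) : ZMod 7 := ((4 + x + 5 * y : ℤ) : ZMod 7)

theorem stmt7 :
    ∀ x y : ℤ,
      -- boundary colors of the upward triangle at (x,y)
      ({cV x y, cV (x + 1) y, cV x (y + 1),
        eH x y, eV x y, eA x y} : Finset (ZMod 7)) =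
        Finset.univ \ {fUp x y} ∧
      -- boundary colors of the downward triangle at (x,y)
      ({cV (x + 1) y, cV x (y + 1), cV (x + 1) (y + 1),
        eA x y, eV (x + 1) y, eH x (y + 1)} : Finset (ZMod 7)) =
        Finset.univ \ {fDown x y} := by
  have key : ∀ c : ZMod 7,
      (({c, c + 1, c + 5, c + 4, c + 6, c + 3} : Finset (ZMod 7)) =
        Finset.univ \ {c + 2}) ∧
      (({c + 1, c + 5, c + 6, c + 3, c + 7, c + 9} : Finset (ZMod 7)) =
        Finset.univ \ {c + 4}) := by decide
  intro x y
  have h := key ((x + 5 * y : ℤ) : ZMod 7)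
  simp only [cV, eH, eV, eA, fUp, fDown]
  convert h using 5 <;> push_cast <;> ring
end

section
/- Color each upward triangular face {(x,y),(x+1,y),(x,y+1)} of the triangular tiling with (2+x+5y) mod 7 and each downward triangular face {(x+1,y),(x,y+1),(x+1,y+1)} with (4+x+5y) mod 7. Then for every vertex v ∈ ℤ×ℤ, the six triangular faces containing v receive pairwise distinct colors. In particular, any two triangular faces sharing a vertex (hence any two sharing an edge) have distinct colors, so the coloring is a strict efficient total cell coloring. -/
/-- Vertex set of the upward triangular face at (x,y). -/
def upSet (x y : ℤ) : Finset (ℤ × ℤ) := {(x, y), (x + 1, y), (x, y + 1)}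

/-- Vertex set of the downward triangular face at (x,y). -/
def downSet (x y : ℤ) : Finset (ℤ × ℤ) := {(x + 1, y), (x, y + 1), (x + 1, y + 1)}

lemma key (a b : ℤ) : ((a : ZMod 7) = (b : ZMod 7)) ↔ a % 7 = b % 7 :=
  ZMod.intCast_eq_intCast_iff' a b 7

theorem stmt8 :
    -- the six triangular faces containing a vertex (x,y) get pairwise distinct colors
    (∀ x y : ℤ,
      ({fUp x y, fUp (x - 1) y, fUp x (y - 1),
        fDown (x - 1) y, fDown x (y - 1), fDown (x - 1) (y - 1)} : Finset (ZMod 7)).card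
        = 6) ∧
    -- any two distinct upward triangles sharing a vertex get distinct colors
    (∀ x y x' y' : ℤ, (x, y) ≠ (x', y') → (upSet x y ∩ upSet x' y').Nonempty →
      fUp x y ≠ fUp x' y') ∧
    -- an upward and a downward triangle sharing a vertex get distinct colors
    (∀ x y x' y' : ℤ, (upSet x y ∩ downSet x' y').Nonempty →
      fUp x y ≠ fDown x' y') ∧
    -- any two distinct downward triangles sharing a vertex get distinct colors
    (∀ x y x' y' : ℤ, (x, y) ≠ (x', y') → (downSet x y ∩ downSet x' y').Nonempty →
      fDown x y ≠ fDown x' y') := by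
  refine ⟨?_, ?_, ?_, ?_⟩
  · intro x y
    have himg : ({fUp x y, fUp (x - 1) y, fUp x (y - 1),
        fDown (x - 1) y, fDown x (y - 1), fDown (x - 1) (y - 1)} : Finset (ZMod 7))
        = Finset.image (fun c => ((x + 5 * y : ℤ) : ZMod 7) + c)
            ({2, 1, -3, 3, -1, -2} : Finset (ZMod 7)) := by
      simp only [Finset.image_insert, Finset.image_singleton, fUp, fDown]
      push_cast
      ring_nf
    rw [himg, Finset.card_image_of_injective _ (add_right_injective _)]
    decide
  · intro x y x' y' hne ⟨⟨v1, v2⟩, hv⟩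
    simp only [upSet, Finset.mem_inter, Finset.mem_insert, Finset.mem_singleton,
      Prod.ext_iff, Prod.mk.injEq, ne_eq] at hv hne
    intro h
    rw [fUp, fUp, key] at h
    omega
  · intro x y x' y' ⟨⟨v1, v2⟩, hv⟩
    simp only [upSet, downSet, Finset.mem_inter, Finset.mem_insert, Finset.mem_singleton,
      Prod.ext_iff, Prod.mk.injEq] at hv
    intro h
    rw [fUp, fDown, key] at h
    omega
  · intro x y x' y' hne ⟨⟨v1, v2⟩, hv⟩
    simp only [downSet, Finset.mem_inter, Finset.mem_insert, Finset.mem_singleton,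
      Prod.ext_iff, Prod.mk.injEq, ne_eq] at hv hne
    intro h
    rw [fDown, fDown, key] at h
    omega
end

section
/- Let S = {(x,y) ∈ ℤ×ℤ : x + 5y ≡ 0 (mod 7)} be a color class of the mod-7 vertex coloring of the triangular-lattice graph GΔ. Then: (i) any two distinct elements of S are at graph distance at least 3 in GΔ; and (ii) every vertex of ℤ×ℤ is at graph distance at most 1 from S. Hence S is an efficient dominating set of GΔ whose removal produces the vertex set of the C&R 3⁴.6 tiling complex. -/
/-- The color class S = {(x,y) : x + 5y ≡ 0 (mod 7)}. -/
def S : Set (ℤ × ℤ) := {p : ℤ × ℤ | ((p.1 + 5 * p.2 : ℤ) : ZMod 7) = 0}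

/-!
The colour `x + 5y mod 7` sends the six neighbour offsets ±(1,0), ±(0,1), ±(1,-1) to ±1, ±5, ±4,
the six nonzero residues. So every closed neighbourhood, a translate of these offsets and `0`,
meets each colour class exactly once: each class is an efficient dominating set. Two vertices at
distance ≤ 2 share a closed neighbourhood, so distinct members of a class are at distance ≥ 3.
-/

namespace SimpleGraph

variable {V : Type*}

def IsEfficientDominating (G : SimpleGraph V) (S : Set V) : Prop :=
  ∀ v, ∃! w, w ∈ S ∧ w ∈ insert v (G.neighborSet v)

variable {G : SimpleGraph V} {S : Set V}

lemma dist_le_one_of_mem_insert_neighborSet {v w : V} (h : w ∈ insert v (G.neighborSet v)) :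
    G.dist v w ≤ 1 := by
  rcases h with rfl | hadj
  · simp
  · exact (dist_eq_one_iff_adj.mpr hadj).le

lemma IsEfficientDominating.exists_dist_le_one (hS : G.IsEfficientDominating S) (v : V) :
    ∃ w ∈ S, G.dist v w ≤ 1 :=
  let ⟨w, ⟨hwS, hw⟩, _⟩ := hS v
  ⟨w, hwS, dist_le_one_of_mem_insert_neighborSet hw⟩

lemma IsEfficientDominating.two_lt_dist (hS : G.IsEfficientDominating S) (hG : G.Preconnected)
    {u v : V} (hu : u ∈ S) (hv : v ∈ S) (huv : u ≠ v) : 2 < G.dist u v := by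
  have not_both : ∀ w, u ∈ insert w (G.neighborSet w) → v ∉ insert w (G.neighborSet w) :=
    fun w hwu hwv => huv ((hS w).unique ⟨hu, hwu⟩ ⟨hv, hwv⟩)
  have hedist : 2 < G.edist u v := by
    rw [two_lt_edist_iff, Set.eq_empty_iff_forall_notMem]
    refine ⟨huv, fun hadj => not_both u (Set.mem_insert _ _) (Set.mem_insert_of_mem _ hadj),
      fun w hw => ?_⟩
    rw [mem_commonNeighbors] at hw
    exact not_both w (Set.mem_insert_of_mem _ hw.1.symm) (Set.mem_insert_of_mem _ hw.2.symm)
  exact_mod_cast (hG u v).coe_dist_eq_edist ▸ hedist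

end SimpleGraph

open SimpleGraph

def latticeColor (p : ℤ × ℤ) : ZMod 7 := ((p.1 + 5 * p.2 : ℤ) : ZMod 7)

lemma mem_S_iff_latticeColor_eq_zero {p : ℤ × ℤ} : p ∈ S ↔ latticeColor p = 0 := Iff.rfl

lemma latticeColor_sub (p q : ℤ × ℤ) : latticeColor (p - q) = latticeColor p - latticeColor q := by
  simp only [latticeColor, Prod.fst_sub, Prod.snd_sub]
  push_cast
  ring

def closedNbhdOffsets : Finset (ℤ × ℤ) := {0, (1, 0), (-1, 0), (0, 1), (0, -1), (1, -1), (-1, 1)}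

lemma existsUnique_mem_closedNbhdOffsets_latticeColor_eq (r : ZMod 7) :
    ∃! d, d ∈ closedNbhdOffsets ∧ latticeColor d = r := by
  have hinj : ∀ a ∈ closedNbhdOffsets, ∀ b ∈ closedNbhdOffsets,
      latticeColor a = latticeColor b → a = b := by decide
  have hsurj : ∀ r : ZMod 7, ∃ d ∈ closedNbhdOffsets, latticeColor d = r := by decide
  obtain ⟨d, hd, rfl⟩ := hsurj r
  exact ⟨d, ⟨hd, rfl⟩, fun e ⟨he, hed⟩ => hinj e he d hd hed⟩

lemma triGraph_adj_iff {u v : ℤ × ℤ} : triGraph.Adj u v ↔ v - u ∈ closedNbhdOffsets ∧ v ≠ u := by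
  simp only [triGraph, fromRel_adj, closedNbhdOffsets, Finset.mem_insert, Finset.mem_singleton,
    Prod.ext_iff, Prod.fst_sub, Prod.snd_sub, Prod.fst_zero, Prod.snd_zero, ne_eq]
  omega

lemma mem_insert_neighborSet_triGraph_iff {v w : ℤ × ℤ} :
    w ∈ insert v (triGraph.neighborSet v) ↔ w - v ∈ closedNbhdOffsets := by
  rw [Set.mem_insert_iff, mem_neighborSet, triGraph_adj_iff]
  by_cases h : w = v
  · simp [h, closedNbhdOffsets]
  · simp [h]

lemma triGraph_isEfficientDominating_S : triGraph.IsEfficientDominating S := by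
  intro v
  refine ((Equiv.subRight v).existsUnique_congr fun w => ?_).mpr
    (existsUnique_mem_closedNbhdOffsets_latticeColor_eq (-latticeColor v))
  rw [mem_insert_neighborSet_triGraph_iff, mem_S_iff_latticeColor_eq_zero, Equiv.subRight_apply,
    latticeColor_sub, and_comm]
  refine and_congr_right fun _ => ⟨fun h => ?_, fun h => ?_⟩ <;> linear_combination h

lemma hasse_le_triGraph : hasse (ℤ × ℤ) ≤ triGraph := by
  intro a b h
  simp only [hasse_prod, boxProd_adj, hasse_adj, Order.covBy_iff_add_one_eq] at h
  simp only [triGraph_adj_iff, closedNbhdOffsets, Finset.mem_insert, Finset.mem_singleton,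
    Prod.ext_iff, Prod.fst_sub, Prod.snd_sub, Prod.fst_zero, Prod.snd_zero, ne_eq]
  omega

lemma triGraph_preconnected : triGraph.Preconnected := by
  refine Preconnected.mono hasse_le_triGraph ?_
  rw [hasse_prod]
  exact (hasse_preconnected_of_succ ℤ).boxProd (hasse_preconnected_of_succ ℤ)

theorem stmt13 :
    -- (i) any two distinct elements of S are at graph distance at least 3
    (∀ u ∈ S, ∀ v ∈ S, u ≠ v → 3 ≤ triGraph.dist u v) ∧
    -- (ii) every vertex is at graph distance at most 1 from S
    (∀ v : ℤ × ℤ, ∃ w ∈ S, triGraph.dist v w ≤ 1) ∧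
    -- hence S is an efficient dominating set
    (∀ v : ℤ × ℤ, ∃! w : ℤ × ℤ, w ∈ S ∧ w ∈ insert v (triGraph.neighborSet v)) :=
  ⟨fun _ hu _ hv huv => triGraph_isEfficientDominating_S.two_lt_dist triGraph_preconnected hu hv huv,
    triGraph_isEfficientDominating_S.exists_dist_le_one, triGraph_isEfficientDominating_S⟩
end

section
/- Fix i ∈ ZMod 5 and let S = {(x,y) ∈ ℤ×ℤ : (x + 2y) mod 5 = i} be a color class of the mod-5 vertex coloring of the grid graph G□. Then any two distinct elements of S are at graph distance at least 3 in G□, and every vertex of ℤ×ℤ is at graph distance at most 1 from S. -/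
/-- The grid graph on ℤ × ℤ: two vertices adjacent iff their difference is ±(1,0) or ±(0,1). -/
def gridGraph : SimpleGraph (ℤ × ℤ) :=
  SimpleGraph.fromRel (fun u v => u - v = (1, 0) ∨ u - v = (0, 1))

/-- The color class of i ∈ ZMod 5 under the coloring (x + 2y) mod 5. -/
def classOf (i : ZMod 5) : Set (ℤ × ℤ) :=
  {p : ℤ × ℤ | ((p.1 + 2 * p.2 : ℤ) : ZMod 5) = i}

/-!
The colouring `(x, y) ↦ x + 2y` is an additive map `ℤ × ℤ → ZMod 5`, so the colour difference of
two vertices is the colour of their difference. The four grid steps `±(1, 0)`, `±(0, 1)` receive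
the four distinct nonzero colours `±1`, `±2`. Hence adjacent vertices never share a colour, two
neighbours of a common vertex share a colour only if they coincide, and together with `0` the
steps realise every colour, so each closed neighbourhood meets every colour class.
-/

open SimpleGraph

lemma SimpleGraph.Reachable.two_lt_dist {V : Type*} {G : SimpleGraph V} {u v : V}
    (h : G.Reachable u v) (hne : u ≠ v) (hadj : ¬G.Adj u v)
    (hcommon : G.commonNeighbors u v = ∅) : 2 < G.dist u v := by
  have := two_lt_edist_iff.mpr ⟨hne, hadj, hcommon⟩
  rw [← h.coe_dist_eq_edist] at this
  exact_mod_cast this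

lemma SimpleGraph.dist_le_one_of_eq_or_adj {V : Type*} {G : SimpleGraph V} {u v : V}
    (h : u = v ∨ G.Adj u v) : G.dist u v ≤ 1 := by
  rcases h with rfl | h
  · simp
  · exact (dist_eq_one_iff_adj.mpr h).le

theorem gridGraph_eq_boxProd : gridGraph = hasse ℤ □ hasse ℤ := by
  ext ⟨a, b⟩ ⟨c, d⟩
  simp only [gridGraph, fromRel_adj, boxProd_adj, hasse_adj, Order.covBy_iff_add_one_eq,
    Prod.mk_sub_mk, Prod.ext_iff, ne_eq]
  omega

theorem gridGraph_connected : gridGraph.Connected := by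
  have hℤ : (hasse ℤ).Connected := ⟨hasse_preconnected_of_succ ℤ⟩
  rw [gridGraph_eq_boxProd]
  exact hℤ.boxProd hℤ

def gridSteps : Finset (ℤ × ℤ) := {(1, 0), (-1, 0), (0, 1), (0, -1)}

theorem gridGraph_adj_iff {u v : ℤ × ℤ} : gridGraph.Adj u v ↔ v - u ∈ gridSteps := by
  obtain ⟨a, b⟩ := u
  obtain ⟨c, d⟩ := v
  simp only [gridGraph, fromRel_adj, gridSteps, Finset.mem_insert, Finset.mem_singleton,
    Prod.mk_sub_mk, Prod.ext_iff, ne_eq]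
  omega

def gridColor : ℤ × ℤ →+ ZMod 5 :=
  AddMonoidHom.mk' (fun p => ((p.1 + 2 * p.2 : ℤ) : ZMod 5)) fun p q => by
    simp only [Prod.fst_add, Prod.snd_add]
    push_cast
    ring

theorem gridColor_ne_zero_of_mem_gridSteps : ∀ d ∈ gridSteps, gridColor d ≠ 0 := by
  decide

theorem gridColor_injOn_gridSteps : Set.InjOn gridColor gridSteps := by
  intro d hd e he
  revert d e
  decide

theorem exists_mem_insert_zero_gridSteps_gridColor_eq :
    ∀ c : ZMod 5, ∃ d ∈ insert 0 gridSteps, gridColor d = c := by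
  decide

theorem three_le_dist_of_gridColor_eq {u v : ℤ × ℤ} (hne : u ≠ v)
    (hcol : gridColor u = gridColor v) : 3 ≤ gridGraph.dist u v := by
  refine (gridGraph_connected.preconnected u v).two_lt_dist hne (fun hadj => ?_) ?_
  · refine gridColor_ne_zero_of_mem_gridSteps _ (gridGraph_adj_iff.mp hadj) ?_
    rw [map_sub, hcol, sub_self]
  · refine Set.eq_empty_of_forall_notMem fun w ⟨hu, hv⟩ => hne ?_
    have hsteps : u - w = v - w := gridColor_injOn_gridSteps
      (gridGraph_adj_iff.mp hu.symm) (gridGraph_adj_iff.mp hv.symm)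
      (by rw [map_sub, map_sub, hcol])
    exact sub_left_inj.mp hsteps

theorem exists_gridColor_eq_dist_le_one (c : ZMod 5) (v : ℤ × ℤ) :
    ∃ w, gridColor w = c ∧ gridGraph.dist v w ≤ 1 := by
  obtain ⟨d, hd, hcol⟩ := exists_mem_insert_zero_gridSteps_gridColor_eq (c - gridColor v)
  refine ⟨v + d, by rw [map_add, hcol, add_sub_cancel], dist_le_one_of_eq_or_adj ?_⟩
  rcases Finset.mem_insert.mp hd with rfl | hd
  · exact .inl (add_zero v).symm
  · exact .inr (gridGraph_adj_iff.mpr (by rwa [add_sub_cancel_left]))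

theorem stmt14 (i : ZMod 5) :
    (∀ u ∈ classOf i, ∀ v ∈ classOf i, u ≠ v → 3 ≤ gridGraph.dist u v) ∧
    (∀ v : ℤ × ℤ, ∃ w ∈ classOf i, gridGraph.dist v w ≤ 1) :=
  ⟨fun _u hu _v hv hne => three_le_dist_of_gridColor_eq hne (hu.trans hv.symm),
    fun v => exists_gridColor_eq_dist_le_one i v⟩
end

section
/- Let G' be the graph obtained from the triangular-lattice graph GΔ on ℤ×ℤ by deleting every anti-diagonal edge {(x+1,y),(x,y+1)} with y even. Then: (i) every vertex of G' has degree exactly 5; and (ii) with vertex colors (x+5y) mod 7, horizontal edge colors (4+x+5y) mod 7 and vertical edge colors (6+x+5y) mod 7, for every (x,y) with y even the set of colors appearing on the four corner vertices and four boundary edges of the unit square with lower-left corner (x,y) is exactly ZMod 7 \ {(3+x+5y) mod 7}. (This realizes the C&R 3³.4² Archimedean tiling, each new square face receiving the color of its deleted anti-diagonal edge.) -/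
/-- The graph obtained from the triangular-lattice graph on ℤ × ℤ by deleting every
anti-diagonal edge {(x+1,y),(x,y+1)} with y even: the anti-diagonal edge with endpoints
u = (x+1,y) and v = (x,y+1) (so u − v = (1,−1)) is kept exactly when u.2 = y is odd. -/
def G' : SimpleGraph (ℤ × ℤ) :=
  SimpleGraph.fromRel (fun u v =>
    u - v = (1, 0) ∨ u - v = (0, 1) ∨ (u - v = (1, -1) ∧ Odd u.2))

lemma colors : ∀ t : ZMod 7,
    ({t, t + 1, t + 5, t + 6, t + 4, t + 2, t + 6, t} : Finset (ZMod 7)) =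
      Finset.univ \ {t + 3} := by decide

lemma nb_even (a b : ℤ) (hb : Even b) :
    G'.neighborSet (a, b) =
      {(a+1, b), (a-1, b), (a, b+1), (a, b-1), (a+1, b-1)} := by
  ext ⟨c, d⟩
  simp only [SimpleGraph.mem_neighborSet, G', SimpleGraph.fromRel_adj,
    Prod.mk_sub_mk, Prod.mk.injEq, Set.mem_insert_iff, Set.mem_singleton_iff,
    ne_eq, not_and, Int.odd_iff, Int.even_iff] at *
  omega

lemma nb_odd (a b : ℤ) (hb : Odd b) :
    G'.neighborSet (a, b) =
      {(a+1, b), (a-1, b), (a, b+1), (a, b-1), (a-1, b+1)} := by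
  ext ⟨c, d⟩
  simp only [SimpleGraph.mem_neighborSet, G', SimpleGraph.fromRel_adj,
    Prod.mk_sub_mk, Prod.mk.injEq, Set.mem_insert_iff, Set.mem_singleton_iff,
    ne_eq, not_and, Int.odd_iff, Int.even_iff] at *
  omega

lemma card5 (a b : ℤ) (p : ℤ × ℤ)
    (h1 : p ≠ (a+1, b)) (h2 : p ≠ (a-1, b)) (h3 : p ≠ (a, b+1)) (h4 : p ≠ (a, b-1)) :
    ({(a+1, b), (a-1, b), (a, b+1), (a, b-1), p} : Set (ℤ × ℤ)).ncard = 5 := by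
  simp only [Prod.ext_iff, ne_eq, not_and] at h1 h2 h3 h4
  rw [Set.ncard_insert_of_notMem (by
    simp only [Set.mem_insert_iff, Set.mem_singleton_iff, Prod.ext_iff, not_or]; omega)]
  rw [Set.ncard_insert_of_notMem (by
    simp only [Set.mem_insert_iff, Set.mem_singleton_iff, Prod.ext_iff, not_or]; omega)]
  rw [Set.ncard_insert_of_notMem (by
    simp only [Set.mem_insert_iff, Set.mem_singleton_iff, Prod.ext_iff, not_or]; omega)]
  rw [Set.ncard_insert_of_notMem (by
    simp only [Set.mem_singleton_iff, Prod.ext_iff, not_and]; omega)]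
  rw [Set.ncard_singleton]

theorem stmt16 :
    -- (i) every vertex of G' has degree exactly 5
    (∀ v : ℤ × ℤ, (G'.neighborSet v).ncard = 5) ∧
    -- (ii) for y even, the boundary of the unit square at (x,y) carries every
    -- color except (3 + x + 5y) mod 7
    (∀ x y : ℤ, Even y →
      ({cV x y, cV (x + 1) y, cV x (y + 1), cV (x + 1) (y + 1),
        eH x y, eH x (y + 1), eV x y, eV (x + 1) y} : Finset (ZMod 7)) =
        Finset.univ \ {((3 + x + 5 * y : ℤ) : ZMod 7)}) := by
  constructor
  · rintro ⟨a, b⟩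
    rcases Int.even_or_odd b with hb | hb
    · rw [nb_even a b hb]
      exact card5 a b _ (by simp [Prod.ext_iff]) (by simp [Prod.ext_iff])
        (by simp [Prod.ext_iff]) (by simp [Prod.ext_iff])
    · rw [nb_odd a b hb]
      exact card5 a b _ (by simp [Prod.ext_iff]) (by simp [Prod.ext_iff])
        (by simp [Prod.ext_iff]) (by simp [Prod.ext_iff])
  · intro x y _
    set t : ZMod 7 := ((x + 5 * y : ℤ) : ZMod 7) with ht
    have e1 : cV (x + 1) y = t + 1 := by rw [ht]; unfold cV; push_cast; ring
    have e2 : cV x (y + 1) = t + 5 := by rw [ht]; unfold cV; push_cast; ring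
    have e3 : cV (x + 1) (y + 1) = t + 6 := by rw [ht]; unfold cV; push_cast; ring
    have e4 : eH x y = t + 4 := by rw [ht]; unfold eH; push_cast; ring
    have e5 : eH x (y + 1) = t + 2 := by
      rw [ht]; unfold eH; push_cast; ring_nf; simp [show (9:ZMod 7)=2 from by decide]
    have e6 : eV x y = t + 6 := by rw [ht]; unfold eV; push_cast; ring
    have e7 : eV (x + 1) y = t := by
      rw [ht]; unfold eV; push_cast; ring_nf; simp [show (7:ZMod 7)=0 from by decide]
    have e0 : cV x y = t := rfl
    have e8 : ((3 + x + 5 * y : ℤ) : ZMod 7) = t + 3 := by rw [ht]; push_cast; ring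
    rw [e0, e1, e2, e3, e4, e5, e6, e7, e8]
    exact colors t
end

section
/- Let T₇ be the toroidal triangular graph on vertex set (ZMod 7) × (ZMod 7), where two vertices are adjacent iff their difference is ±(1,0), ±(0,1) or ±(1,−1). For every vertex v = (x,y) of T₇, the coloring c(x,y) = x + 5y ∈ ZMod 7 restricts to a bijection from the closed neighborhood N[v] (v together with its six neighbors) onto ZMod 7. Consequently each of the seven color classes {(x,y) : x+5y = i} is an efficient dominating set of T₇ of size 7. -/
/-- The toroidal triangular graph on (ZMod 7) × (ZMod 7): two vertices adjacent iff their
difference is ±(1,0), ±(0,1) or ±(1,−1). -/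
def T7 : SimpleGraph ((ZMod 7) × (ZMod 7)) :=
  SimpleGraph.fromRel (fun u v => u - v = (1, 0) ∨ u - v = (0, 1) ∨ u - v = (1, -1))

/-- The coloring c(x,y) = x + 5y ∈ ZMod 7. -/
def cT7 (p : (ZMod 7) × (ZMod 7)) : ZMod 7 := p.1 + 5 * p.2

def D7 : Finset ((ZMod 7) × (ZMod 7)) :=
  {(0,0),(1,0),(-1,0),(0,1),(0,-1),(1,-1),(-1,1)}

lemma aux7 (d : (ZMod 7) × (ZMod 7)) :
    (d = 0 ∨ ¬ d = 0 ∧ ((-d = (1,0) ∨ -d = (0,1) ∨ -d = (1,-1)) ∨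
      (d = (1,0) ∨ d = (0,1) ∨ d = (1,-1)))) ↔ d ∈ D7 := by revert d; decide

lemma mem_key (v w : (ZMod 7) × (ZMod 7)) :
    w ∈ insert v (T7.neighborSet v) ↔ w - v ∈ D7 := by
  obtain ⟨d, rfl⟩ : ∃ d, w = v + d := ⟨w - v, by ring⟩
  rw [add_sub_cancel_left, ← aux7 d]
  simp only [Set.mem_insert_iff, SimpleGraph.mem_neighborSet, T7, SimpleGraph.fromRel_adj,
    ne_eq, left_eq_add, add_eq_left, add_sub_cancel_left,
    show v - (v + d) = -d from by ring]

lemma uniq7 (j : ZMod 7) : ∃! d, d ∈ D7 ∧ cT7 d = j := by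
  revert j; unfold ExistsUnique; decide

lemma c_add (v d : (ZMod 7) × (ZMod 7)) : cT7 (v + d) = cT7 v + cT7 d := by
  simp [cT7]; ring

lemma c_sub (v d : (ZMod 7) × (ZMod 7)) : cT7 (v - d) = cT7 v - cT7 d := by
  simp [cT7]; ring

lemma part2 (i : ZMod 7) (v : (ZMod 7) × (ZMod 7)) :
    ∃! w : (ZMod 7) × (ZMod 7), w ∈ insert v (T7.neighborSet v) ∧ cT7 w = i := by
  obtain ⟨d, ⟨hdD, hdc⟩, hu⟩ := uniq7 (i - cT7 v)
  refine ⟨v + d, ⟨(mem_key v _).mpr (by rwa [add_sub_cancel_left]), by rw [c_add, hdc]; ring⟩, ?_⟩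
  rintro w ⟨hm, hc⟩
  have := hu (w - v) ⟨(mem_key v w).mp hm, by rw [c_sub, hc]⟩
  have hw : w = v + d := by rw [← this]; ring
  exact hw

theorem stmt19 :
    (∀ v : (ZMod 7) × (ZMod 7),
      Set.BijOn cT7 (insert v (T7.neighborSet v)) Set.univ) ∧
    (∀ i : ZMod 7, ∀ v : (ZMod 7) × (ZMod 7),
      ∃! w : (ZMod 7) × (ZMod 7), w ∈ insert v (T7.neighborSet v) ∧ cT7 w = i) ∧
    (∀ i : ZMod 7,
      (Finset.univ.filter (fun p : (ZMod 7) × (ZMod 7) => cT7 p = i)).card = 7) := by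
  refine ⟨fun v => ⟨fun _ _ => trivial, ?_, ?_⟩, part2, by decide⟩
  · intro a ha b hb hab
    obtain ⟨w, hw, hu⟩ := part2 (cT7 a) v
    rw [hu a ⟨ha, rfl⟩, hu b ⟨hb, hab.symm⟩]
  · intro i _
    obtain ⟨w, ⟨hm, hc⟩, _⟩ := part2 i v
    exact ⟨w, hm, hc⟩
end
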